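/- Assume additionally that V_i → ∞ as i → ∞. Then for every integer r and every x ∈ ℚ_p the series Σ_{i=r+1}^{∞} V_{i−1}^{−1/2}(1 − V_{i−1}/V_i)^{1/2}·φ_i(x) converges absolutely and Ω(|x|_p p^{−r}) = V_r · Σ_{i=r+1}^{∞} V_{i−1}^{−1/2}(1 − V_{i−1}/V_i)^{1/2}·φ_i(x); that is, the indicator function of the ball |x|_p ≤ p^r is expanded in the family (φ_i) with coefficients V_r·V_{i−1}^{−1/2}(1 − V_{i−1}/V_i)^{1/2} for i ≥ r+1. -/

import Mathlib

/-!
Put `G i = Ω(|x|_p p^{-i}) / V_i`. The coefficient `V_{i-1}^{-1/2}(1 - V_{i-1}/V_i)^{1/2}` undoes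
the normalisation of `φ_i` up to the factor `V_{i-1}⁻¹`, so the `i`-th term is `G (i-1) - G i` and
the series telescopes to `G r`, because `0 ≤ G i ≤ 1 / V_i → 0`. Once the ball of radius `p^i`
contains `x`, `G i = 1 / V_i` decreases, so the terms are eventually nonnegative and the
convergence is absolute.
-/

open MeasureTheory Filter

/-- `Ω(r) = 1` for `r ≤ 1` and `Ω(r) = 0` for `r > 1`. -/
noncomputable def Omega (r : ℝ) : ℝ := if r ≤ 1 then 1 else 0

open Finset Topology

lemma summable_abs_sub_succ_of_eventually_antitone {f : ℕ → ℝ} {l : ℝ}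
    (hf : Tendsto f atTop (𝓝 l)) (hanti : ∀ᶠ n in atTop, f (n + 1) ≤ f n) :
    Summable fun n => |f n - f (n + 1)| := by
  obtain ⟨N, hN⟩ := eventually_atTop.1 hanti
  rw [← summable_nat_add_iff N]
  have hshift : Antitone fun n => f (n + N) :=
    antitone_nat_of_succ_le fun n => by rw [add_right_comm]; exact hN _ (by omega)
  have hlim : Tendsto (fun n => f (n + N)) atTop (𝓝 l) := hf.comp (tendsto_add_atTop_nat N)
  have hterm : ∀ n, |f (n + N) - f (n + N + 1)| = f (n + N) - f (n + 1 + N) := fun n => by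
    rw [add_right_comm, abs_of_nonneg (sub_nonneg.2 (hshift n.le_succ))]
  refine summable_of_sum_range_le (c := f N - l) (fun n => abs_nonneg _) fun n => ?_
  rw [sum_congr rfl fun i _ => hterm i, sum_range_sub' (fun i => f (i + N)), zero_add]
  linarith [hshift.le_of_tendsto hlim n]

lemma tsum_sub_succ_of_tendsto {f : ℕ → ℝ} {l : ℝ} (hs : Summable fun n => f n - f (n + 1))
    (hf : Tendsto f atTop (𝓝 l)) : ∑' n, (f n - f (n + 1)) = f 0 - l := by
  refine tendsto_nhds_unique hs.hasSum.tendsto_sum_nat ?_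
  simp_rw [sum_range_sub']
  exact tendsto_const_nhds.sub hf

lemma Omega_nonneg (t : ℝ) : 0 ≤ Omega t := by
  unfold Omega; split_ifs <;> norm_num

lemma Omega_le_one (t : ℝ) : Omega t ≤ 1 := by
  unfold Omega; split_ifs <;> norm_num

lemma eventually_Omega_mul_zpow_neg_eq_one (a : ℝ) {b : ℝ} (hb : 1 < b) :
    ∀ᶠ i : ℤ in atTop, Omega (a * b ^ (-i)) = 1 := by
  obtain ⟨N, hN⟩ := pow_unbounded_of_one_lt a hb
  filter_upwards [eventually_ge_atTop (N : ℤ)] with i hi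
  have hab : a ≤ b ^ i := hN.le.trans (by exact_mod_cast zpow_le_zpow_right₀ hb.le hi)
  refine if_pos ?_
  calc a * b ^ (-i) ≤ b ^ i * b ^ (-i) := by gcongr
    _ = 1 := by rw [← zpow_add₀ (by positivity), add_neg_cancel, zpow_zero]

lemma eventually_Omega_mul_zpow_neg_div_succ_le {V : ℤ → ℝ} (hVpos : ∀ i, 0 < V i)
    (hVmono : ∀ i, V i ≤ V (i + 1)) (a : ℝ) {b : ℝ} (hb : 1 < b) :
    ∀ᶠ i : ℤ in atTop, Omega (a * b ^ (-(i + 1))) / V (i + 1) ≤ Omega (a * b ^ (-i)) / V i := by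
  filter_upwards [eventually_Omega_mul_zpow_neg_eq_one a hb,
    (tendsto_atTop_add_const_right _ 1 tendsto_id).eventually
      (eventually_Omega_mul_zpow_neg_eq_one a hb)] with i hi hi1
  rw [id] at hi1
  rw [hi, hi1]
  exact one_div_le_one_div_of_le (hVpos i) (hVmono i)

lemma rpow_neg_half_mul_rpow_half_mul_eq_div_sub_div {a b : ℝ} (ha : 0 < a) (hab : a < b)
    (s t : ℝ) :
    a ^ (-(1 / 2 : ℝ)) * (1 - a / b) ^ (1 / 2 : ℝ) *
        ((a * (1 - a / b)) ^ (-(1 / 2 : ℝ)) * (s - a / b * t)) = s / a - t / b := by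
  have hq : 0 < 1 - a / b := by rw [sub_pos, div_lt_one (ha.trans hab)]; exact hab
  have ha' : a ^ (-(1 / 2 : ℝ)) * a ^ (-(1 / 2 : ℝ)) = a⁻¹ := by
    rw [← Real.rpow_add ha]; norm_num [Real.rpow_neg_one]
  have hq' : (1 - a / b) ^ (1 / 2 : ℝ) * (1 - a / b) ^ (-(1 / 2 : ℝ)) = 1 := by
    rw [← Real.rpow_add hq]; norm_num
  rw [Real.mul_rpow ha.le hq.le]
  calc _ = (a ^ (-(1 / 2 : ℝ)) * a ^ (-(1 / 2 : ℝ))) *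
          ((1 - a / b) ^ (1 / 2 : ℝ) * (1 - a / b) ^ (-(1 / 2 : ℝ))) * (s - a / b * t) := by ring
    _ = s / a - t / b := by rw [ha', hq']; field_simp

theorem padic_ball_indicator_expansion_general
    (p : ℕ) [Fact p.Prime]
    [MeasurableSpace ℚ_[p]]
    (μ : Measure ℚ_[p])
    (u : ℚ_[p] → ℝ) (hu_pos : ∀ x : ℚ_[p], 0 < u x)
    (V : ℤ → ℝ)
    (hV : ∀ i : ℤ, V i = ∫ y : ℚ_[p], u y * Omega (‖y‖ * (p : ℝ) ^ (-i)) ∂μ)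
    (hVmono : ∀ i : ℤ, V (i - 1) < V i)
    (hVtop : Tendsto V atTop atTop)
    (φ : ℤ → ℚ_[p] → ℝ)
    (hφ : ∀ (i : ℤ) (x : ℚ_[p]), φ i x =
      (V (i - 1) * (1 - V (i - 1) / V i)) ^ (-(1 / 2 : ℝ)) *
        (Omega (‖x‖ * (p : ℝ) ^ (-i + 1)) - V (i - 1) / V i * Omega (‖x‖ * (p : ℝ) ^ (-i)))) :
    ∀ (r : ℤ) (x : ℚ_[p]),
      Summable (fun n : ℕ =>
        |(V (r + n)) ^ (-(1 / 2 : ℝ)) * (1 - V (r + n) / V (r + 1 + n)) ^ ((1 / 2 : ℝ)) *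
          φ (r + 1 + n) x|) ∧
      Omega (‖x‖ * (p : ℝ) ^ (-r)) =
        V r * ∑' n : ℕ,
          (V (r + n)) ^ (-(1 / 2 : ℝ)) * (1 - V (r + n) / V (r + 1 + n)) ^ ((1 / 2 : ℝ)) *
            φ (r + 1 + n) x := by
  intro r x
  have hp : (1 : ℝ) < p := by exact_mod_cast (Fact.out : p.Prime).one_lt
  have hVpos : ∀ i, 0 < V i := fun i => (hVmono i).trans_le' <| by
    rw [hV]; exact integral_nonneg fun y => mul_nonneg (hu_pos y).le (Omega_nonneg _)
  set G : ℤ → ℝ := fun i => Omega (‖x‖ * (p : ℝ) ^ (-i)) / V i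
  have hsucc : ∀ n : ℕ, r + ((n + 1 : ℕ) : ℤ) = r + 1 + n := fun n => by push_cast; ring
  have hterm : ∀ n : ℕ,
      (V (r + n)) ^ (-(1 / 2 : ℝ)) * (1 - V (r + n) / V (r + 1 + n)) ^ ((1 / 2 : ℝ)) *
        φ (r + 1 + n) x = G (r + n) - G (r + (n + 1 : ℕ)) := fun n => by
    have hlt : V (r + n) < V (r + 1 + n) := by convert hVmono (r + 1 + n) using 2; ring
    rw [hφ, show r + 1 + (n : ℤ) - 1 = r + n by ring,
      show -(r + 1 + (n : ℤ)) + 1 = -(r + n) by ring,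
      rpow_neg_half_mul_rpow_half_mul_eq_div_sub_div (hVpos _) hlt, hsucc]
  have hG0 : Tendsto G atTop (𝓝 0) :=
    squeeze_zero (fun i => div_nonneg (Omega_nonneg _) (hVpos i).le)
      (fun i => div_le_div_of_nonneg_right (Omega_le_one _) (hVpos i).le)
      (by simpa only [one_div, Pi.inv_def] using hVtop.inv_tendsto_atTop)
  have hr : Tendsto (fun n : ℕ => r + (n : ℤ)) atTop atTop :=
    tendsto_atTop_add_const_left _ r tendsto_natCast_atTop_atTop
  have hGr : Tendsto (fun n : ℕ => G (r + n)) atTop (𝓝 0) := hG0.comp hr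
  have hG_anti : ∀ᶠ i in atTop, G (i + 1) ≤ G i :=
    eventually_Omega_mul_zpow_neg_div_succ_le hVpos
      (fun i => by simpa using (hVmono (i + 1)).le) ‖x‖ hp
  simp_rw [hterm]
  have hsum := summable_abs_sub_succ_of_eventually_antitone hGr <|
    (hr.eventually hG_anti).mono fun n hn => by rwa [hsucc, add_right_comm]
  refine ⟨hsum, ?_⟩
  rw [tsum_sub_succ_of_tendsto hsum.of_abs hGr]
  simp [G, mul_div_cancel₀ _ (hVpos r).ne']

/-- if moreover `V_i → ∞`, then the indicator of the ball `|x|_p ≤ p^r`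
is expanded in the family `(φ_i)` as
`Ω(|x|_p p^{-r}) = V_r Σ_{i=r+1}^∞ V_{i-1}^{-1/2}(1 - V_{i-1}/V_i)^{1/2} φ_i(x)`,
the series converging absolutely. -/
theorem padic_ball_indicator_expansion
    (p : ℕ) [Fact p.Prime]
    [MeasurableSpace ℚ_[p]] [BorelSpace ℚ_[p]]
    (μ : Measure ℚ_[p]) [μ.IsAddHaarMeasure]
    (hμ : μ (Metric.closedBall 0 1) = 1)
    (u : ℚ_[p] → ℝ) (hu_pos : ∀ x : ℚ_[p], 0 < u x)
    (hu_loc : LocallyIntegrable u μ)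
    (V : ℤ → ℝ)
    (hVint : ∀ i : ℤ, Integrable (fun y : ℚ_[p] => u y * Omega (‖y‖ * (p : ℝ) ^ (-i))) μ)
    (hV : ∀ i : ℤ, V i = ∫ y : ℚ_[p], u y * Omega (‖y‖ * (p : ℝ) ^ (-i)) ∂μ)
    (hVmono : ∀ i : ℤ, V (i - 1) < V i)
    (hVtop : Tendsto V atTop atTop)
    (φ : ℤ → ℚ_[p] → ℝ)
    (hφ : ∀ (i : ℤ) (x : ℚ_[p]), φ i x =
      (V (i - 1) * (1 - V (i - 1) / V i)) ^ (-(1 / 2 : ℝ)) *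
        (Omega (‖x‖ * (p : ℝ) ^ (-i + 1)) - V (i - 1) / V i * Omega (‖x‖ * (p : ℝ) ^ (-i)))) :
    ∀ (r : ℤ) (x : ℚ_[p]),
      Summable (fun n : ℕ =>
        |(V (r + n)) ^ (-(1 / 2 : ℝ)) * (1 - V (r + n) / V (r + 1 + n)) ^ ((1 / 2 : ℝ)) *
          φ (r + 1 + n) x|) ∧
      Omega (‖x‖ * (p : ℝ) ^ (-r)) =
        V r * ∑' n : ℕ,
          (V (r + n)) ^ (-(1 / 2 : ℝ)) * (1 - V (r + n) / V (r + 1 + n)) ^ ((1 / 2 : ℝ)) *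
            φ (r + 1 + n) x :=
  padic_ball_indicator_expansion_general p μ u hu_pos V hV hVmono hVtop φ hφ
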